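/- arXiv:2501.03516 — 4 statements merged into one kernel-verified Lean document; each statement's English description precedes it below -/
import Mathlib

section
/- Let q and n be coprime positive integers and γ ∈ ℤ/nℤ. If τ ∣ n and γq ≡ γ (mod n/τ), where τ = |c(γ)|, then for every j ≥ 0 one has (n/τ) ∣ (γ q^j − γ), and the elements γ q^j − γ for j = 0, …, τ−1 are exactly the τ multiples of n/τ in ℤ/nℤ. -/
/-- The `q`-cyclotomic coset of `γ` modulo `n`, i.e. `{γ q^j : j ≥ 0} ⊆ ℤ/nℤ`. -/
def coset (n q : ℕ) (γ : ZMod n) : Set (ZMod n) := {x | ∃ j : ℕ, x = γ * (q : ZMod n) ^ j}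

/-- `τ` is the size of the coset: the least positive `t` with `γ q^t ≡ γ (mod n)`. -/
def cosetSize (n q : ℕ) (γ : ZMod n) (τ : ℕ) : Prop :=
  IsLeast {t : ℕ | 0 < t ∧ γ * (q : ZMod n) ^ t = γ} τ

/-- The arithmetic progression `{δ + k (n/μ) : 0 ≤ k < μ}` in `ℤ/nℤ`. -/
def progression (n : ℕ) (δ : ZMod n) (μ : ℕ) : Set (ZMod n) :=
  {x | ∃ k < μ, x = δ + ((k * (n / μ) : ℕ) : ZMod n)}

/-- The coset `c_{n/q}(γ)` is of equal difference. -/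
def IsEqDiffCoset (n q : ℕ) (γ : ZMod n) : Prop :=
  ∃ τ : ℕ, cosetSize n q γ τ ∧ τ ∣ n ∧ coset n q γ = progression n γ τ

/-- The radical of `m`: the product of its distinct prime divisors. -/
def rad (m : ℕ) : ℕ := ∏ p ∈ m.primeFactors, p

/-!
The map `ℤ/n → ℤ/(n/τ)` is a ring homomorphism, so `γ q ≡ γ` propagates to `γ q^j ≡ γ`, i.e. every
`γ q^j - γ` lies in its kernel, which consists of the `τ` multiples of `n/τ`. The `τ` elements
`γ q^j - γ`, `j < τ`, are distinct by minimality of `τ`: a repetition `γ q^i = γ q^j` with `i < j < τ`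
gives `γ q^(j-i) = γ q^τ q^(j-i) = γ q^j q^(τ-i) = γ q^τ = γ`. Counting closes the argument.
-/

theorem map_mul_pow_eq_of_map_mul_eq {F M N : Type*} [Monoid M] [Monoid N] [FunLike F M N]
    [MonoidHomClass F M N] (f : F) {γ q : M} (h : f (γ * q) = f γ) (j : ℕ) :
    f (γ * q ^ j) = f γ := by
  induction j with
  | zero => simp
  | succ j ih => rw [pow_succ, ← mul_assoc, map_mul, ih, ← map_mul, h]

theorem injOn_mul_pow_Iio_of_isLeast {M : Type*} [Monoid M] {γ q : M} {τ : ℕ}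
    (hτ : IsLeast {t : ℕ | 0 < t ∧ γ * q ^ t = γ} τ) :
    Set.InjOn (fun j : ℕ => γ * q ^ j) (Set.Iio τ) := by
  suffices h : ∀ i j, i < j → j < τ → γ * q ^ i = γ * q ^ j → False by
    intro i hi j hj hij
    rcases lt_trichotomy i j with hlt | heq | hgt
    · exact (h i j hlt hj hij).elim
    · exact heq
    · exact (h j i hgt hi hij.symm).elim
  intro i j hij hj heq
  have hperiod : γ * q ^ (j - i) = γ :=
    calc γ * q ^ (j - i) = γ * q ^ τ * q ^ (j - i) := by rw [hτ.1.2]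
      _ = γ * q ^ j * q ^ (τ - i) := by simp only [mul_assoc, ← pow_add]; congr 2; omega
      _ = γ * q ^ i * q ^ (τ - i) := by rw [heq]
      _ = γ * q ^ τ := by rw [mul_assoc, ← pow_add, Nat.add_sub_cancel' (by omega)]
      _ = γ := hτ.1.2
  have := hτ.2 ⟨Nat.sub_pos_of_lt hij, hperiod⟩
  omega

theorem ZMod.ncard_ker_castHom {m n : ℕ} [NeZero n] (h : m ∣ n) :
    {x : ZMod n | ZMod.castHom h (ZMod m) x = 0}.ncard = n / m := by
  set f := (ZMod.castHom h (ZMod m)).toAddMonoidHom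
  have hm : 0 < m := Nat.pos_of_ne_zero fun hm => NeZero.ne n (zero_dvd_iff.mp (hm ▸ h))
  have hcard := f.ker.card_mul_index
  rw [AddSubgroup.index_ker, AddMonoidHom.range_eq_top.mpr (ZMod.castHom_surjective h),
    AddSubgroup.card_top, Nat.card_zmod, Nat.card_zmod] at hcard
  exact Nat.eq_div_of_mul_eq_left hm.ne' hcard

theorem multiples_of_common_difference_general (n q τ : ℕ) (hn : 0 < n)
    (γ : ZMod n) (hτ : cosetSize n q γ τ) (hdvd : τ ∣ n)
    (hcongr : ZMod.castHom (Nat.div_dvd_of_dvd hdvd) (ZMod (n / τ)) (γ * (q : ZMod n)) =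
      ZMod.castHom (Nat.div_dvd_of_dvd hdvd) (ZMod (n / τ)) γ) :
    (∀ j : ℕ, ZMod.castHom (Nat.div_dvd_of_dvd hdvd) (ZMod (n / τ))
        (γ * (q : ZMod n) ^ j - γ) = 0) ∧
    ({x : ZMod n | ∃ j < τ, x = γ * (q : ZMod n) ^ j - γ} =
      {x : ZMod n | ZMod.castHom (Nat.div_dvd_of_dvd hdvd) (ZMod (n / τ)) x = 0}) ∧
    Set.InjOn (fun j : ℕ => γ * (q : ZMod n) ^ j - γ) (Set.Iio τ) := by
  have : NeZero n := ⟨hn.ne'⟩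
  set f := ZMod.castHom (Nat.div_dvd_of_dvd hdvd) (ZMod (n / τ))
  have hdiff : ∀ j : ℕ, f (γ * (q : ZMod n) ^ j - γ) = 0 := fun j => by
    rw [map_sub, map_mul_pow_eq_of_map_mul_eq f hcongr, sub_self]
  have hinj : Set.InjOn (fun j : ℕ => γ * (q : ZMod n) ^ j - γ) (Set.Iio τ) :=
    (sub_left_injective (b := γ)).comp_injOn (injOn_mul_pow_Iio_of_isLeast hτ)
  have himage : {x : ZMod n | ∃ j < τ, x = γ * (q : ZMod n) ^ j - γ} =
      (fun j : ℕ => γ * (q : ZMod n) ^ j - γ) '' Set.Iio τ := by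
    ext x
    simp only [Set.mem_ofPred_eq, Set.mem_image, Set.mem_Iio, eq_comm]
  refine ⟨hdiff, Set.eq_of_subset_of_ncard_le ?_ ?_ (Set.toFinite _), hinj⟩
  · rintro _ ⟨j, -, rfl⟩
    exact hdiff j
  · rw [ZMod.ncard_ker_castHom, Nat.div_div_self hdvd hn.ne', himage,
      hinj.ncard_image, Set.ncard_Iio_nat]

/-- If `τ ∣ n` and `γ q ≡ γ (mod n/τ)`, then `(n/τ) ∣ γ q^j - γ` for all `j`, and the
elements `γ q^j - γ`, `j = 0, …, τ-1`, are pairwise distinct and are exactly the `τ`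
multiples of `n/τ` in `ℤ/nℤ`. -/
theorem multiples_of_common_difference (n q τ : ℕ) (hn : 0 < n) (hq : 0 < q)
    (hco : Nat.Coprime q n) (γ : ZMod n) (hτ : cosetSize n q γ τ) (hdvd : τ ∣ n)
    (hcongr : ZMod.castHom (Nat.div_dvd_of_dvd hdvd) (ZMod (n / τ)) (γ * (q : ZMod n)) =
      ZMod.castHom (Nat.div_dvd_of_dvd hdvd) (ZMod (n / τ)) γ) :
    (∀ j : ℕ, ZMod.castHom (Nat.div_dvd_of_dvd hdvd) (ZMod (n / τ))
        (γ * (q : ZMod n) ^ j - γ) = 0) ∧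
    ({x : ZMod n | ∃ j < τ, x = γ * (q : ZMod n) ^ j - γ} =
      {x : ZMod n | ZMod.castHom (Nat.div_dvd_of_dvd hdvd) (ZMod (n / τ)) x = 0}) ∧
    Set.InjOn (fun j : ℕ => γ * (q : ZMod n) ^ j - γ) (Set.Iio τ) :=
  multiples_of_common_difference_general n q τ hn γ hτ hdvd hcongr
end

section
/- Let q be a prime power coprime to n, γ ∈ ℤ/nℤ, set n_γ = n / gcd(γ, n) (for a lift of γ to ℤ). The q-cyclotomic coset c(γ) modulo n is of equal difference if and only if (i) rad(n_γ) divides q − 1, and (ii) if 8 ∣ n_γ then q ≡ 1 (mod 4). -/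
open scoped Nat

theorem rad_dvd_iff {m a : ℕ} : rad m ∣ a ↔ ∀ p ∈ m.primeFactors, p ∣ a :=
  ⟨fun h _ hp => (Finset.dvd_prod_of_mem _ hp).trans h,
    Finset.prod_primes_dvd a fun _ hp => (Nat.prime_of_mem_primeFactors hp).prime⟩

theorem Nat.exists_mul_eq_split_primeFactors {m : ℕ} (hm : m ≠ 0) (P : ℕ → Prop) :
    ∃ u v : ℕ, u * v = m ∧ (∀ p ∈ u.primeFactors, P p) ∧ ∀ p ∈ v.primeFactors, ¬ P p := by
  classical
  have hfilter : ∀ (Q : ℕ → Prop) [DecidablePred Q],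
      ∀ p ∈ ((m.factorization.filter Q).prod (· ^ ·)).primeFactors, Q p := by
    intro Q _ p hp
    have hsupp : (m.factorization.filter Q).support = m.primeFactors.filter Q := by
      rw [Finsupp.support_filter, Nat.support_factorization]
    rw [← Nat.support_factorization, Nat.prod_pow_factorization_eq_self
      fun p hp => Nat.prime_of_mem_primeFactors (Finset.mem_of_mem_filter p (hsupp ▸ hp)),
      hsupp, Finset.mem_filter] at hp
    exact hp.2
  exact ⟨_, _, (Finsupp.prod_filter_mul_prod_filter_not P _ _).trans
    (Nat.prod_factorization_pow_eq_self hm), hfilter P, hfilter (¬ P ·)⟩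

theorem Int.natCast_dvd_pow_self_sub_one {k : ℕ} {x : ℤ}
    (h : ∀ p ∈ k.primeFactors, (p : ℤ) ∣ x - 1) : (k : ℤ) ∣ x ^ k - 1 := by
  rcases eq_or_ne k 0 with rfl | hk
  · simp
  rw [Int.natCast_dvd, Nat.dvd_iff_prime_pow_dvd_dvd]
  rintro p (_ | j) hp hpj
  · simp
  rw [← Int.natCast_dvd, Nat.cast_pow]
  have hpx : (p : ℤ) ∣ x - 1 :=
    h p (Nat.mem_primeFactors.mpr ⟨hp, (dvd_pow_self p j.succ_ne_zero).trans hpj, hk⟩)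
  obtain ⟨r, hr⟩ := (pow_dvd_pow p j.le_succ).trans hpj
  have hlift := dvd_sub_pow_of_dvd_sub hpx j
  rw [one_pow] at hlift
  simpa [hr] using hlift.trans (pow_one_sub_dvd_pow_mul_sub_one x _ r)

theorem Int.prime_pow_dvd_pow_sub_one_iff {p : ℕ} (hp : p.Prime) {x : ℤ}
    (hpx : (p : ℤ) ∣ x - 1) (h2 : p = 2 → 4 ∣ x - 1) {a j : ℕ} :
    (p : ℤ) ^ a ∣ x ^ j - 1 ↔ (p : ℤ) ^ a ∣ (x - 1) * j := by
  have hx : ¬ (p : ℤ) ∣ x := fun h =>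
    hp.not_dvd_one (Int.natCast_dvd_natCast.mp (by simpa using dvd_sub h hpx))
  have lte : emultiplicity (p : ℤ) (x ^ j - 1) =
      emultiplicity (p : ℤ) (x - 1) + emultiplicity (p : ℤ) j := by
    rcases hp.eq_two_or_odd' with rfl | hodd
    · simpa using Int.two_pow_sub_pow' j (h2 rfl) hx
    · simpa [Int.natCast_emultiplicity] using Int.emultiplicity_pow_sub_pow hp hodd hpx hx j
  rw [pow_dvd_iff_le_emultiplicity, pow_dvd_iff_le_emultiplicity,
    emultiplicity_mul (Nat.prime_iff_prime_int.mp hp), lte]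

theorem Int.even_of_four_dvd_pow_sub_one {x : ℤ} (hx : x % 4 = 3) {t : ℕ}
    (h : 4 ∣ x ^ t - 1) : Even t := by
  have hx' : (x : ZMod 4) = -1 := by
    rw [← Int.cast_one, ← Int.cast_neg, ZMod.intCast_eq_intCast_iff_dvd_sub]; omega
  rw [← neg_one_pow_eq_one_iff_even (R := ZMod 4) (by decide), ← hx', ← Int.cast_pow,
    ← Int.cast_one, ZMod.intCast_eq_intCast_iff_dvd_sub, dvd_sub_comm]
  exact_mod_cast h

theorem Int.two_pow_dvd_pow_two_pow_sub_one {x : ℤ} (hx : Odd x) {a : ℕ} (ha : 3 ≤ a) :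
    (2 : ℤ) ^ a ∣ x ^ 2 ^ (a - 2) - 1 := by
  have hsq : (2 : ℤ) ^ 3 ∣ x ^ 2 - 1 := by simpa using Int.eight_dvd_sq_sub_one_of_odd hx
  obtain ⟨b, rfl⟩ := Nat.exists_eq_add_of_le ha
  rw [show 3 + b - 2 = b + 1 by omega, pow_succ', pow_mul]
  refine (Int.prime_pow_dvd_pow_sub_one_iff (p := 2) Nat.prime_two ?_ ?_).mpr ?_
  · exact (dvd_pow_self 2 (by norm_num)).trans hsq
  · exact fun _ => (by norm_num : (4 : ℤ) ∣ 2 ^ 3).trans hsq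
  · push_cast
    rw [pow_add]
    exact mul_dvd_mul hsq dvd_rfl

theorem ZMod.orderOf_intCast_dvd_iff {m j : ℕ} {x : ℤ} :
    orderOf (x : ZMod m) ∣ j ↔ (m : ℤ) ∣ x ^ j - 1 := by
  rw [orderOf_dvd_iff_pow_eq_one, ← Int.cast_pow, ← Int.cast_one,
    ZMod.intCast_eq_intCast_iff_dvd_sub, dvd_sub_comm]

theorem ZMod.orderOf_intCast_dvd_totient {m : ℕ} {x : ℤ} (h : IsCoprime (m : ℤ) x) :
    orderOf (x : ZMod m) ∣ φ m := by
  have hu := (ZMod.coe_int_isUnit_iff_isCoprime x m).mpr h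
  have := congrArg Units.val (ZMod.pow_totient hu.unit)
  rw [Units.val_pow_eq_pow_val, IsUnit.unit_spec, Units.val_one] at this
  exact orderOf_dvd_of_pow_eq_one this

theorem ZMod.natCast_dvd_orderOf_mul_sub_one {m : ℕ} (hm : m ≠ 0) {x : ℤ}
    (hrad : ∀ p ∈ m.primeFactors, (p : ℤ) ∣ x - 1) (h8 : 8 ∣ m → 4 ∣ x - 1) :
    (m : ℤ) ∣ orderOf (x : ZMod m) * (x - 1) := by
  set t := orderOf (x : ZMod m)
  have hmt : (m : ℤ) ∣ x ^ t - 1 := ZMod.orderOf_intCast_dvd_iff.mp dvd_rfl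
  rw [Int.natCast_dvd, Nat.dvd_iff_prime_pow_dvd_dvd]
  rintro p (_ | j) hp hpj
  · simp
  rw [← Int.natCast_dvd, Nat.cast_pow]
  have hpx : (p : ℤ) ∣ x - 1 :=
    hrad p (Nat.mem_primeFactors.mpr ⟨hp, (dvd_pow_self p j.succ_ne_zero).trans hpj, hm⟩)
  have hpt : (p : ℤ) ^ (j + 1) ∣ x ^ t - 1 :=
    (Int.natCast_dvd_natCast.mpr hpj).trans (by simpa using hmt)
  by_cases h2 : p = 2 ∧ ¬ 4 ∣ x - 1
  swap
  · rw [mul_comm]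
    exact (Int.prime_pow_dvd_pow_sub_one_iff hp hpx (by tauto)).mp hpt
  -- LTE fails for `p = 2`, `x ≡ 3 (mod 4)`; then `8 ∤ m` leaves `j + 1 ≤ 2`, and `t` is even.
  obtain ⟨rfl, h4⟩ := h2
  have hj : j ≤ 1 := by
    by_contra! hj
    exact h4 (h8 ((Nat.pow_dvd_pow 2 (by omega : 3 ≤ j + 1)).trans hpj))
  interval_cases j
  · simpa using dvd_mul_of_dvd_right hpx _
  · have hx4 : x % 4 = 3 := by push_cast at hpx; omega
    obtain ⟨s, hs⟩ := Int.even_of_four_dvd_pow_sub_one hx4 (by simpa using hpt)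
    rw [hs]
    push_cast
    rw [← two_mul, mul_assoc, show (4 : ℤ) = 2 * 2 by norm_num]
    exact mul_dvd_mul_left 2 (dvd_mul_of_dvd_right (by simpa using hpx) _)

theorem ZMod.primeFactors_dvd_sub_one_of_dvd_orderOf_mul {m : ℕ} (hm : m ≠ 0) {x : ℤ}
    (hx : IsCoprime (m : ℤ) x) (h : (m : ℤ) ∣ orderOf (x : ZMod m) * (x - 1)) :
    ∀ p ∈ m.primeFactors, (p : ℤ) ∣ x - 1 := by
  obtain ⟨u, v, rfl, hu, hv⟩ :=
    Nat.exists_mul_eq_split_primeFactors hm fun p => (p : ℤ) ∣ x - 1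
  obtain ⟨hu0, hv0⟩ := mul_ne_zero_iff.mp hm
  suffices v = 1 by simpa [this] using hu
  have huv : u.Coprime v := (Nat.disjoint_primeFactors hu0 hv0).mp <|
    Finset.disjoint_left.mpr fun p hpu hpv => hv p hpv (hu p hpu)
  have hvx : IsCoprime (v : ℤ) (x - 1) := by
    rw [Int.isCoprime_iff_gcd_eq_one]
    exact Nat.coprime_of_dvd fun p hp hpv hpx =>
      hv p (Nat.mem_primeFactors.mpr ⟨hp, hpv, hv0⟩) (Int.natCast_dvd.mpr hpx)
  have hvt : v ∣ orderOf (x : ZMod (u * v)) := by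
    rw [← Int.natCast_dvd_natCast]
    exact hvx.dvd_of_dvd_mul_right ((Int.natCast_dvd_natCast.mpr (dvd_mul_left v u)).trans h)
  have htu : orderOf (x : ZMod (u * v)) ∣ u * φ v := by
    rw [ZMod.orderOf_intCast_dvd_iff, Nat.cast_mul]
    refine (Nat.isCoprime_iff_coprime.mpr huv).mul_dvd
      ((Int.natCast_dvd_pow_self_sub_one hu).trans (pow_one_sub_dvd_pow_mul_sub_one x _ _)) ?_
    have hv' := ZMod.orderOf_intCast_dvd_iff.mp (ZMod.orderOf_intCast_dvd_totient
      (hx.of_isCoprime_of_dvd_left (Int.natCast_dvd_natCast.mpr (dvd_mul_left v u))))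
    rw [mul_comm]
    exact hv'.trans (pow_one_sub_dvd_pow_mul_sub_one x _ _)
  have hvφ : v ∣ φ v := huv.symm.dvd_of_dvd_mul_left (hvt.trans htu)
  by_contra hv1
  exact (Nat.le_of_dvd (Nat.totient_pos.mpr (Nat.pos_of_ne_zero hv0)) hvφ).not_gt
    (Nat.totient_lt v (by omega))

theorem ZMod.four_dvd_sub_one_of_dvd_orderOf_mul {m : ℕ} (hm : m ≠ 0) {x : ℤ}
    (hrad : ∀ p ∈ m.primeFactors, (p : ℤ) ∣ x - 1)
    (h : (m : ℤ) ∣ orderOf (x : ZMod m) * (x - 1)) (h8 : 8 ∣ m) : 4 ∣ x - 1 := by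
  by_contra h4
  set a := m.factorization 2
  set w := ordCompl[2] m
  set t := orderOf (x : ZMod m)
  have hm2 : 2 ^ a * w = m := Nat.ordProj_mul_ordCompl_eq_self m 2
  have hw : ¬ 2 ∣ w := Nat.not_dvd_ordCompl Nat.prime_two hm
  have ha : 3 ≤ a := (Nat.prime_two.pow_dvd_iff_le_factorization hm).mp h8
  obtain ⟨r, hr⟩ : (2 : ℤ) ∣ x - 1 :=
    hrad 2 (Nat.mem_primeFactors.mpr ⟨Nat.prime_two, by omega, hm⟩)
  have hr2 : ¬ 2 ∣ r := fun ⟨s, hs⟩ => h4 ⟨s, by rw [hr, hs]; ring⟩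
  have hlow : 2 ^ (a - 1) ∣ t := by
    have : (2 : ℤ) ^ (a - 1) * 2 ∣ t * r * 2 := by
      rw [← pow_succ, Nat.sub_add_cancel (by omega), mul_assoc, mul_comm r, ← hr]
      exact (Int.natCast_dvd_natCast.mpr (Nat.ordProj_dvd m 2)).trans (by simpa using h)
    have := (Int.prime_two.coprime_iff_not_dvd.mpr hr2).pow_left.dvd_of_dvd_mul_right
      ((mul_dvd_mul_iff_right two_ne_zero).mp this)
    exact_mod_cast this
  have hup : t ∣ 2 ^ (a - 2) * w := by
    have hodd : Odd x := by rw [← Int.not_even_iff_odd, even_iff_two_dvd]; omega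
    have h2a : ((2 ^ a : ℕ) : ℤ) ∣ x ^ 2 ^ (a - 2) - 1 := by
      exact_mod_cast Int.two_pow_dvd_pow_two_pow_sub_one hodd ha
    have hw' : (w : ℤ) ∣ x ^ w - 1 := Int.natCast_dvd_pow_self_sub_one fun p hp =>
      hrad p (Nat.primeFactors_mono (Nat.ordCompl_dvd m 2) hm hp)
    rw [ZMod.orderOf_intCast_dvd_iff, ← hm2, Nat.cast_mul]
    refine (Nat.isCoprime_iff_coprime.mpr
      ((Nat.prime_two.coprime_iff_not_dvd.mpr hw).pow_left a)).mul_dvd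
      (h2a.trans (pow_one_sub_dvd_pow_mul_sub_one x _ _)) ?_
    rw [mul_comm]
    exact hw'.trans (pow_one_sub_dvd_pow_mul_sub_one x _ _)
  have := hlow.trans hup
  rw [show a - 1 = a - 2 + 1 by omega, pow_succ] at this
  exact hw (Nat.dvd_of_mul_dvd_mul_left (by positivity) this)

theorem ZMod.natCast_dvd_orderOf_mul_sub_one_iff {m : ℕ} (hm : m ≠ 0) {x : ℤ}
    (hx : IsCoprime (m : ℤ) x) :
    (m : ℤ) ∣ orderOf (x : ZMod m) * (x - 1) ↔
      (∀ p ∈ m.primeFactors, (p : ℤ) ∣ x - 1) ∧ (8 ∣ m → 4 ∣ x - 1) := by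
  refine ⟨fun h => ?_, fun ⟨hrad, h8⟩ => ZMod.natCast_dvd_orderOf_mul_sub_one hm hrad h8⟩
  have hrad := ZMod.primeFactors_dvd_sub_one_of_dvd_orderOf_mul hm hx h
  exact ⟨hrad, ZMod.four_dvd_sub_one_of_dvd_orderOf_mul hm hrad h⟩

theorem ZMod.isOfFinOrder_natCast {m q : ℕ} [NeZero m] (hq : q.Coprime m) :
    IsOfFinOrder (q : ZMod m) := by
  rw [← ZMod.coe_unitOfCoprime q hq, Units.isOfFinOrder_val]
  exact isOfFinOrder_of_finite _

theorem ncard_progression_le {n : ℕ} (δ : ZMod n) (μ : ℕ) : (progression n δ μ).ncard ≤ μ := by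
  have : progression n δ μ = (fun k : ℕ => δ + ((k * (n / μ) : ℕ) : ZMod n)) '' Set.Iio μ := by
    ext x
    simp [progression, eq_comm]
  rw [this]
  exact (Set.ncard_image_le (Set.finite_Iio μ)).trans (Set.ncard_Iio_nat μ).le

theorem mul_pow_eq_mul_pow_iff {n : ℕ} (γ : ZMod n) (q i j : ℕ) :
    γ * (q : ZMod n) ^ i = γ * (q : ZMod n) ^ j ↔
      (q : ZMod (addOrderOf γ)) ^ i = (q : ZMod (addOrderOf γ)) ^ j := by
  rw [← Nat.cast_pow, ← Nat.cast_pow, mul_comm γ, mul_comm γ, ← nsmul_eq_mul, ← nsmul_eq_mul,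
    nsmul_eq_nsmul_iff_modEq, ← ZMod.natCast_eq_natCast_iff, Nat.cast_pow, Nat.cast_pow]

section Coset

variable {n : ℕ} [NeZero n]

theorem ZMod.addOrderOf_eq_div_gcd_val (γ : ZMod n) : addOrderOf γ = n / Nat.gcd γ.val n := by
  rw [Nat.gcd_comm, ← ZMod.addOrderOf_coe _ (NeZero.ne n), ZMod.natCast_zmod_val]

theorem mem_progression_iff {δ x : ZMod n} {μ : ℕ} (hμ : μ ∣ n) :
    x ∈ progression n δ μ ↔ (μ : ZMod n) * (x - δ) = 0 := by
  obtain ⟨s, hs⟩ := hμ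
  have hμ0 : 0 < μ := Nat.pos_of_ne_zero fun h => NeZero.ne n (by simp [hs, h])
  have hns : n / μ = s := by rw [hs, Nat.mul_div_cancel_left _ hμ0]
  simp only [progression, Set.mem_ofPred_eq, hns]
  constructor
  · rintro ⟨k, -, rfl⟩
    rw [add_sub_cancel_left, ← Nat.cast_mul, ZMod.natCast_eq_zero_iff, hs]
    exact ⟨k, by ring⟩
  · intro h
    have hval : μ * s ∣ μ * (x - δ).val := by
      rwa [← hs, ← ZMod.natCast_eq_zero_iff, Nat.cast_mul, ZMod.natCast_zmod_val]
    obtain ⟨k, hk⟩ := Nat.dvd_of_mul_dvd_mul_left hμ0 hval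
    refine ⟨k, ?_, ?_⟩
    · have := (x - δ).val_lt
      rw [hk, hs, mul_comm μ] at this
      exact Nat.lt_of_mul_lt_mul_left this
    · rw [mul_comm, ← hk, ZMod.natCast_zmod_val, add_sub_cancel]

instance ZMod.neZero_addOrderOf (γ : ZMod n) : NeZero (addOrderOf γ) :=
  ⟨(addOrderOf_pos γ).ne'⟩

variable {γ : ZMod n} {q : ℕ}

theorem mul_pow_eq_mul_pow_iff_modEq (hq : q.Coprime (addOrderOf γ)) {i j : ℕ} :
    γ * (q : ZMod n) ^ i = γ * (q : ZMod n) ^ j ↔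
      i ≡ j [MOD orderOf (q : ZMod (addOrderOf γ))] := by
  rw [mul_pow_eq_mul_pow_iff γ q, (ZMod.isOfFinOrder_natCast hq).pow_eq_pow_iff_modEq]

theorem cosetSize_orderOf (hq : q.Coprime (addOrderOf γ)) :
    cosetSize n q γ (orderOf (q : ZMod (addOrderOf γ))) := by
  have key : ∀ s, γ * (q : ZMod n) ^ s = γ ↔ orderOf (q : ZMod (addOrderOf γ)) ∣ s := by
    intro s
    simpa [Nat.modEq_zero_iff_dvd] using mul_pow_eq_mul_pow_iff_modEq hq (i := s) (j := 0)
  exact ⟨⟨(ZMod.isOfFinOrder_natCast hq).orderOf_pos, (key _).mpr dvd_rfl⟩,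
    fun s ⟨hs, hs'⟩ => Nat.le_of_dvd hs ((key s).mp hs')⟩

theorem ncard_coset (hq : q.Coprime (addOrderOf γ)) :
    (coset n q γ).ncard = orderOf (q : ZMod (addOrderOf γ)) := by
  set t := orderOf (q : ZMod (addOrderOf γ))
  have : coset n q γ = (fun j => γ * (q : ZMod n) ^ j) '' Set.Iio t := by
    ext x
    constructor
    · rintro ⟨j, rfl⟩
      exact ⟨j % t, Nat.mod_lt _ ((ZMod.isOfFinOrder_natCast hq).orderOf_pos),
        (mul_pow_eq_mul_pow_iff_modEq hq).mpr (Nat.mod_modEq j t)⟩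
    · rintro ⟨j, -, rfl⟩
      exact ⟨j, rfl⟩
  rw [this, Set.InjOn.ncard_image, Set.ncard_Iio_nat]
  exact fun i hi j hj hij => ((mul_pow_eq_mul_pow_iff_modEq hq).mp hij).eq_of_lt_of_lt hi hj

theorem isEqDiffCoset_iff (hq : q.Coprime (addOrderOf γ)) :
    IsEqDiffCoset n q γ ↔ orderOf (q : ZMod (addOrderOf γ)) ∣ n ∧
      (addOrderOf γ : ℤ) ∣ orderOf (q : ZMod (addOrderOf γ)) * ((q : ℤ) - 1) := by
  set t := orderOf (q : ZMod (addOrderOf γ))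
  have hsmul : ∀ j, (t : ZMod n) * (γ * (q : ZMod n) ^ j - γ) =
      (t * ((q : ℤ) ^ j - 1) : ℤ) • γ := by
    intro j
    rw [zsmul_eq_mul]
    push_cast
    ring
  constructor
  · rintro ⟨τ, hτ, hτn, hset⟩
    obtain rfl : τ = t := hτ.unique (cosetSize_orderOf hq)
    have hγq : γ * q ∈ progression n γ t := hset ▸ ⟨1, by rw [pow_one]⟩
    rw [mem_progression_iff hτn, ← pow_one (q : ZMod n), hsmul, pow_one] at hγq
    exact ⟨hτn, addOrderOf_dvd_iff_zsmul_eq_zero.mpr hγq⟩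
  · rintro ⟨htn, hdvd⟩
    refine ⟨t, cosetSize_orderOf hq, htn, Set.eq_of_subset_of_ncard_le ?_ ?_⟩
    · rintro _ ⟨j, rfl⟩
      rw [mem_progression_iff htn, hsmul, ← addOrderOf_dvd_iff_zsmul_eq_zero]
      exact hdvd.trans (mul_dvd_mul_left _ (sub_one_dvd_pow_sub_one _ _))
    · rw [ncard_coset hq]
      exact ncard_progression_le γ t

end Coset

/-- For a prime power `q` coprime to `n`, the coset `c_{n/q}(γ)` is of equal difference
iff `rad(n_γ) ∣ q - 1` and, in case `8 ∣ n_γ`, `q ≡ 1 (mod 4)`. -/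
theorem eq_diff_iff_rad (n q : ℕ) (hn : 0 < n) (hq : ∃ p k : ℕ, p.Prime ∧ 0 < k ∧ q = p ^ k)
    (hco : Nat.Coprime q n) (γ : ZMod n) :
    IsEqDiffCoset n q γ ↔
      (rad (n / Nat.gcd γ.val n) ∣ q - 1 ∧ (8 ∣ n / Nat.gcd γ.val n → q % 4 = 1)) := by
  have : NeZero n := ⟨hn.ne'⟩
  obtain ⟨p, k, hp, -, hpk⟩ := hq
  have hq1 : 1 ≤ q := hpk ▸ Nat.one_le_pow k p hp.pos
  rw [← ZMod.addOrderOf_eq_div_gcd_val, rad_dvd_iff]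
  set m := addOrderOf γ
  have hmn : m ∣ n := addOrderOf_dvd_of_nsmul_eq_zero (by simp)
  have hqm : q.Coprime m := hco.coprime_dvd_right hmn
  have key := ZMod.natCast_dvd_orderOf_mul_sub_one_iff (NeZero.ne m)
    (Nat.isCoprime_iff_coprime.mpr hqm.symm) (x := q)
  rw [Int.cast_natCast] at key
  have h4 : q % 4 = 1 ↔ 4 ∣ (q : ℤ) - 1 := by omega
  simp only [← Int.natCast_dvd_natCast (n := q - 1), Nat.cast_sub hq1, Nat.cast_one, h4,
    isEqDiffCoset_iff hqm, ← key]
  refine ⟨And.right, fun h => ⟨?_, h⟩⟩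
  have hrad := (key.mp h).1
  rw [← Int.cast_natCast (R := ZMod m) q]
  exact (ZMod.orderOf_intCast_dvd_iff.mpr (Int.natCast_dvd_pow_self_sub_one hrad)).trans hmn
end

section
/- Let q be a prime power and n coprime to q. All q-cyclotomic cosets modulo n are of equal difference if and only if some (equivalently, every) primitive q-cyclotomic coset modulo n (one containing an element γ with gcd(γ, n) = 1) is of equal difference. -/
/-!
A coset `c(γ)` is of equal difference exactly when `γ` is periodic under `x ↦ x q` and `c(γ)` is
a translate `γ + (a)` of a principal ideal of `ℤ/nℤ`: every such ideal is generated by a divisor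
`e` of `n`, so `γ + (e)` is the progression of step `e` with `n / e` terms, and the number of
terms is forced to be the period because the orbit of a periodic point has as many elements as
its minimal period. Multiplying by any `c` maps `c(γ)` onto `c(cγ)` and `γ + (a)` onto
`cγ + (ca)`, so equal difference passes from `γ` to every multiple `cγ`. A primitive `γ` is a
unit, and every residue is a multiple of it.
-/

open Function

theorem Function.ncard_range_iterate {α : Type*} {f : α → α} {x : α} (hx : x ∈ periodicPts f) :
    (Set.range fun m => f^[m] x).ncard = minimalPeriod f x := by
  have hrange : (Set.range fun m => f^[m] x) = (f^[·] x) '' Set.Iio (minimalPeriod f x) := by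
    refine subset_antisymm ?_ (Set.image_subset_range _ _)
    rintro _ ⟨m, rfl⟩
    exact ⟨m % minimalPeriod f x, Nat.mod_lt _ (minimalPeriod_pos_of_mem_periodicPts hx),
      (isPeriodicPt_minimalPeriod f x).iterate_mod_apply m⟩
  rw [hrange, iterate_injOn_Iio_minimalPeriod.ncard_image, Set.ncard_Iio_nat]

namespace ZMod

variable {n : ℕ} [NeZero n]

theorem dvd_iff_gcd_val_dvd (a x : ZMod n) : a ∣ x ↔ (a.val.gcd n : ZMod n) ∣ x := by
  have hgcd_dvd : (a.val.gcd n : ZMod n) ∣ a := by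
    simpa only [natCast_zmod_val] using Nat.cast_dvd_cast (α := ZMod n) (Nat.gcd_dvd_left a.val n)
  have hdvd_gcd : a ∣ (a.val.gcd n : ZMod n) := ⟨a⁻¹, (mul_inv_eq_gcd a).symm⟩
  exact ⟨hgcd_dvd.trans, hdvd_gcd.trans⟩

theorem natCast_dvd_iff_exists_lt {e : ℕ} (he : e ∣ n) (x : ZMod n) :
    (e : ZMod n) ∣ x ↔ ∃ k < n / e, x = ((k * e : ℕ) : ZMod n) := by
  have hn : 0 < n := Nat.pos_of_neZero n
  refine ⟨?_, ?_⟩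
  · rintro ⟨y, rfl⟩
    set k := y.val % (n / e)
    have hsplit : e * y.val = n * (y.val / (n / e)) + k * e := by
      calc e * y.val = e * ((n / e) * (y.val / (n / e)) + k) := by rw [Nat.div_add_mod]
        _ = (e * (n / e)) * (y.val / (n / e)) + k * e := by ring
        _ = n * (y.val / (n / e)) + k * e := by rw [Nat.mul_div_cancel' he]
    refine ⟨k, Nat.mod_lt _ (Nat.div_pos (Nat.le_of_dvd hn he) (Nat.pos_of_dvd_of_pos he hn)), ?_⟩
    rw [← natCast_zmod_val y, ← Nat.cast_mul, hsplit]
    simp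
  · rintro ⟨k, -, rfl⟩
    exact ⟨k, by push_cast; ring⟩

end ZMod

section Cosets

variable {n q : ℕ}

theorem coset_mul (c γ : ZMod n) : coset n q (c * γ) = (c * ·) '' coset n q γ := by
  ext x
  constructor
  · rintro ⟨j, rfl⟩
    exact ⟨γ * (q : ZMod n) ^ j, ⟨j, rfl⟩, (mul_assoc _ _ _).symm⟩
  · rintro ⟨_, ⟨j, rfl⟩, rfl⟩
    exact ⟨j, (mul_assoc _ _ _).symm⟩

theorem image_mul_setOf_dvd_sub {R : Type*} [CommRing R] (c a b : R) :
    (c * ·) '' {x | a ∣ x - b} = {x | c * a ∣ x - c * b} := by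
  ext x
  refine ⟨?_, ?_⟩
  · rintro ⟨y, hy, rfl⟩
    simpa only [Set.mem_ofPred_eq, ← mul_sub] using mul_dvd_mul_left c hy
  · rintro ⟨k, hk⟩
    exact ⟨b + a * k, by simp, by linear_combination -hk⟩

theorem cosetSize_ncard {γ : ZMod n} (hper : ∃ t, 0 < t ∧ γ * (q : ZMod n) ^ t = γ) :
    cosetSize n q γ (coset n q γ).ncard := by
  have hiter : ∀ m, (· * (q : ZMod n))^[m] γ = γ * (q : ZMod n) ^ m :=
    fun m => mul_right_iterate_apply _ _
  have hperiodic : ∀ t, IsPeriodicPt (· * (q : ZMod n)) t γ ↔ γ * (q : ZMod n) ^ t = γ :=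
    fun t => by rw [IsPeriodicPt, IsFixedPt, hiter]
  obtain ⟨t, ht, hγ⟩ := hper
  have hx : γ ∈ periodicPts (· * (q : ZMod n)) := mk_mem_periodicPts ht ((hperiodic t).mpr hγ)
  have hcoset : coset n q γ = Set.range fun m => (· * (q : ZMod n))^[m] γ := by
    ext x
    simp only [coset, hiter, Set.mem_ofPred_eq, Set.mem_range, eq_comm]
  rw [hcoset, ncard_range_iterate hx]
  exact ⟨⟨minimalPeriod_pos_of_mem_periodicPts hx,
      (hperiodic _).mp (isPeriodicPt_minimalPeriod _ γ)⟩,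
    fun s ⟨hs, hγs⟩ => IsPeriodicPt.minimalPeriod_le hs ((hperiodic s).mpr hγs)⟩

variable [NeZero n]

theorem progression_eq_setOf_dvd {τ : ℕ} (hτ : τ ∣ n) (δ : ZMod n) :
    progression n δ τ = {x | ((n / τ : ℕ) : ZMod n) ∣ x - δ} := by
  ext x
  rw [Set.mem_ofPred_eq, ZMod.natCast_dvd_iff_exists_lt (Nat.div_dvd_of_dvd hτ),
    Nat.div_div_self hτ (NeZero.ne n)]
  exact exists_congr fun _ => and_congr_right fun _ => sub_eq_iff_eq_add'.symm

theorem ncard_progression {τ : ℕ} (hτ : τ ∣ n) (δ : ZMod n) : (progression n δ τ).ncard = τ := by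
  have hn : 0 < n := Nat.pos_of_neZero n
  have hstep : 0 < n / τ := Nat.div_pos (Nat.le_of_dvd hn hτ) (Nat.pos_of_dvd_of_pos hτ hn)
  have hlt : ∀ k < τ, k * (n / τ) < n := fun k hk =>
    (Nat.mul_lt_mul_right hstep).mpr hk |>.trans_eq (Nat.mul_div_cancel' hτ)
  have himage : progression n δ τ = (fun k => δ + ((k * (n / τ) : ℕ) : ZMod n)) '' Set.Iio τ := by
    ext x
    simp only [progression, Set.mem_ofPred_eq, Set.mem_image, Set.mem_Iio, eq_comm]
  rw [himage, Set.InjOn.ncard_image, Set.ncard_Iio_nat]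
  intro k hk l hl hkl
  have hval := congrArg ZMod.val (add_left_cancel hkl)
  rw [ZMod.val_cast_of_lt (hlt k hk), ZMod.val_cast_of_lt (hlt l hl)] at hval
  exact Nat.eq_of_mul_eq_mul_right hstep hval

theorem isEqDiffCoset_iff_s8 {γ : ZMod n} :
    IsEqDiffCoset n q γ ↔
      (∃ t, 0 < t ∧ γ * (q : ZMod n) ^ t = γ) ∧ ∃ a : ZMod n, coset n q γ = {x | a ∣ x - γ} := by
  refine ⟨fun ⟨τ, hsize, hτ, hset⟩ => ⟨⟨τ, hsize.1⟩, _, hset.trans (progression_eq_setOf_dvd hτ γ)⟩,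
    fun ⟨hper, a, hset⟩ => ?_⟩
  have hgcd : a.val.gcd n ∣ n := Nat.gcd_dvd_right _ _
  have hτ : n / a.val.gcd n ∣ n := Nat.div_dvd_of_dvd hgcd
  have hprog : coset n q γ = progression n γ (n / a.val.gcd n) := by
    rw [progression_eq_setOf_dvd hτ, Nat.div_div_self hgcd (NeZero.ne n), hset]
    exact Set.ext fun x => ZMod.dvd_iff_gcd_val_dvd a (x - γ)
  refine ⟨_, ?_, hτ, hprog⟩
  simpa only [hprog, ncard_progression hτ] using cosetSize_ncard hper

theorem IsEqDiffCoset.mul {γ : ZMod n} (h : IsEqDiffCoset n q γ) (c : ZMod n) :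
    IsEqDiffCoset n q (c * γ) := by
  obtain ⟨⟨t, ht, hγ⟩, a, hset⟩ := isEqDiffCoset_iff_s8.mp h
  refine isEqDiffCoset_iff_s8.mpr ⟨⟨t, ht, by rw [mul_assoc, hγ]⟩, c * a, ?_⟩
  rw [coset_mul, hset, image_mul_setOf_dvd_sub]

theorem IsEqDiffCoset.of_gcd_val_eq_one {γ : ZMod n} (hγ : γ.val.gcd n = 1)
    (h : IsEqDiffCoset n q γ) (γ' : ZMod n) : IsEqDiffCoset n q γ' := by
  have hinv : γ⁻¹ * γ = 1 := by rw [mul_comm, ZMod.mul_inv_eq_gcd, hγ, Nat.cast_one]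
  simpa only [mul_assoc, hinv, mul_one] using h.mul (γ' * γ⁻¹)

end Cosets

theorem all_eq_diff_iff_primitive_general (n q : ℕ) (hn : 0 < n) :
    ((∀ γ : ZMod n, IsEqDiffCoset n q γ) ↔
      (∃ γ : ZMod n, Nat.gcd γ.val n = 1 ∧ IsEqDiffCoset n q γ)) ∧
    ((∀ γ : ZMod n, IsEqDiffCoset n q γ) ↔
      (∀ γ : ZMod n, Nat.gcd γ.val n = 1 → IsEqDiffCoset n q γ)) := by
  have : NeZero n := ⟨hn.ne'⟩
  have hone : Nat.gcd (1 : ZMod n).val n = 1 := by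
    rw [ZMod.val_one_eq_one_mod, ← Nat.gcd_rec, Nat.gcd_one_right]
  exact ⟨⟨fun h => ⟨1, hone, h 1⟩, fun ⟨γ, hγ, h⟩ => h.of_gcd_val_eq_one hγ⟩,
    ⟨fun h γ _ => h γ, fun h => (h 1 hone).of_gcd_val_eq_one hone⟩⟩

/-- All `q`-cyclotomic cosets modulo `n` are of equal difference iff some primitive one is,
equivalently iff every primitive one is. -/
theorem all_eq_diff_iff_primitive (n q : ℕ) (hn : 0 < n)
    (hq : ∃ p k : ℕ, p.Prime ∧ 0 < k ∧ q = p ^ k) (hco : Nat.Coprime q n) :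
    ((∀ γ : ZMod n, IsEqDiffCoset n q γ) ↔
      (∃ γ : ZMod n, Nat.gcd γ.val n = 1 ∧ IsEqDiffCoset n q γ)) ∧
    ((∀ γ : ZMod n, IsEqDiffCoset n q γ) ↔
      (∀ γ : ZMod n, Nat.gcd γ.val n = 1 → IsEqDiffCoset n q γ)) :=
  all_eq_diff_iff_primitive_general n q hn
end

section
/- Let q be coprime to n, γ ∈ ℤ/nℤ, and t a positive integer. Let τ = |c_{n/q}(γ)| and t′ = gcd(t, τ). Then the q^t-cyclotomic coset of γ modulo n equals the q^{t′}-cyclotomic coset of γ modulo n, and c_{n/q}(γ) is the disjoint union of the q^t-cyclotomic cosets of γ q^j for j = 0, 1, …, t′ − 1. -/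
/-!
Right multiplication by `q` moves `γ` around a cycle of length `τ`: `γ q^a = γ q^b` exactly when
`a ≡ b (mod τ)`. Modulo `τ` the multiples of `t` are exactly the multiples of `t' = gcd(t, τ)`,
so the `q^t`-coset of `γ q^i` consists of the `γ q^m` with `m ≡ i (mod t')`, and these classes
for `i < t'` partition the cycle.
-/

theorem Nat.exists_mul_modEq_gcd_mul (t m : ℕ) {τ : ℕ} (hτ : 0 < τ) :
    ∃ j, t * j ≡ t.gcd τ * m [MOD τ] := by
  rcases (Nat.gcd_le_right t hτ).lt_or_eq with hlt | heq
  · obtain ⟨j, -, hj⟩ := Nat.exists_mul_mod_eq_gcd hlt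
    exact ⟨j * m, by rw [← mul_assoc, ← hj]; exact (Nat.mod_modEq _ _).symm.mul_right m⟩
  · exact ⟨0, by rw [heq, mul_zero]; exact (Nat.modEq_zero_iff_dvd.2 (dvd_mul_right τ m)).symm⟩

namespace Function

variable {α : Type*} {f : α → α} {x : α}

theorem iterate_eq_iterate_iff_modEq (hx : x ∈ periodicPts f) {a b : ℕ} :
    f^[a] x = f^[b] x ↔ a ≡ b [MOD minimalPeriod f x] := by
  have hpos := minimalPeriod_pos_of_mem_periodicPts hx
  rw [← iterate_mod_minimalPeriod_eq (n := a), ← iterate_mod_minimalPeriod_eq (n := b)]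
  exact iterate_eq_iterate_iff_of_lt_minimalPeriod (Nat.mod_lt _ hpos) (Nat.mod_lt _ hpos)

theorem range_iterate_mul_eq_range_iterate_gcd_mul (hx : x ∈ periodicPts f) (t : ℕ) :
    Set.range (fun j => f^[t * j] x) =
      Set.range (fun j => f^[t.gcd (minimalPeriod f x) * j] x) := by
  apply subset_antisymm
  · rintro _ ⟨j, rfl⟩
    refine ⟨t / t.gcd (minimalPeriod f x) * j, ?_⟩
    dsimp only
    rw [← mul_assoc, Nat.mul_div_cancel' (Nat.gcd_dvd_left _ _)]
  · rintro _ ⟨m, rfl⟩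
    obtain ⟨j, hj⟩ :=
      Nat.exists_mul_modEq_gcd_mul t m (minimalPeriod_pos_of_mem_periodicPts hx)
    exact ⟨j, (iterate_eq_iterate_iff_modEq hx).2 hj⟩

theorem range_iterate_eq_iUnion_range_iterate_mul (hx : x ∈ periodicPts f) (t : ℕ) :
    Set.range (f^[·] x) = ⋃ i ∈ Finset.range (t.gcd (minimalPeriod f x)),
      Set.range (fun j => f^[t * j] (f^[i] x)) := by
  have hpos := minimalPeriod_pos_of_mem_periodicPts hx
  set g := t.gcd (minimalPeriod f x)
  apply subset_antisymm
  · rintro _ ⟨m, rfl⟩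
    obtain ⟨j, hj⟩ : ∃ j, t * j ≡ g * (m / g) [MOD minimalPeriod f x] :=
      Nat.exists_mul_modEq_gcd_mul t (m / g) hpos
    refine Set.mem_biUnion (Finset.mem_range.2 (Nat.mod_lt m (Nat.gcd_pos_of_pos_right t hpos)))
      ⟨j, ?_⟩
    dsimp only
    rw [← iterate_add_apply, iterate_eq_iterate_iff_modEq hx]
    simpa only [Nat.div_add_mod] using hj.add_right (m % g)
  · refine Set.iUnion₂_subset fun i _ => ?_
    rintro _ ⟨j, rfl⟩
    exact ⟨t * j + i, by dsimp only; exact iterate_add_apply f _ _ x⟩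

theorem pairwise_disjoint_range_iterate_mul (hx : x ∈ periodicPts f) (t : ℕ) :
    Set.Pairwise ↑(Finset.range (t.gcd (minimalPeriod f x)))
      (fun i j => Disjoint (Set.range (fun k => f^[t * k] (f^[i] x)))
        (Set.range (fun k => f^[t * k] (f^[j] x)))) := by
  intro i hi j hj hij
  simp only [Finset.coe_range, Set.mem_Iio] at hi hj
  rw [Set.disjoint_left]
  rintro _ ⟨k, rfl⟩ ⟨l, hl⟩
  dsimp only at hl
  rw [← iterate_add_apply, ← iterate_add_apply, iterate_eq_iterate_iff_modEq hx] at hl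
  have hdvd : t.gcd (minimalPeriod f x) ∣ t := Nat.gcd_dvd_left _ _
  have hmul : t * l ≡ t * k [MOD t.gcd (minimalPeriod f x)] :=
    (Nat.modEq_zero_iff_dvd.2 (hdvd.mul_right l)).trans
      (Nat.modEq_zero_iff_dvd.2 (hdvd.mul_right k)).symm
  have hji : j ≡ i [MOD t.gcd (minimalPeriod f x)] :=
    hmul.add_left_cancel (hl.of_dvd (Nat.gcd_dvd_right _ _))
  exact hij (hji.eq_of_lt_of_lt hj hi).symm

end Function

open Function

theorem coset_eq_range_iterate (n q : ℕ) (δ : ZMod n) :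
    coset n q δ = Set.range ((· * (q : ZMod n))^[·] δ) := by
  ext
  simp [coset, mul_right_iterate, eq_comm]

theorem coset_pow_eq_range_iterate (n q t : ℕ) (δ : ZMod n) :
    coset n (q ^ t) δ = Set.range (fun j => (· * (q : ZMod n))^[t * j] δ) := by
  ext
  simp [coset, mul_right_iterate, pow_mul, eq_comm]

theorem cosetSize.minimalPeriod_eq {n q τ : ℕ} {γ : ZMod n} (hτ : cosetSize n q γ τ) :
    minimalPeriod (· * (q : ZMod n)) γ = τ := by
  obtain ⟨⟨hτpos, hfix⟩, hmin⟩ := hτ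
  have hper : IsPeriodicPt (· * (q : ZMod n)) τ γ := by
    simpa [IsPeriodicPt, IsFixedPt, mul_right_iterate] using hfix
  refine le_antisymm (hper.minimalPeriod_le hτpos) (hmin ⟨hper.minimalPeriod_pos hτpos, ?_⟩)
  have hγ := iterate_minimalPeriod (f := (· * (q : ZMod n))) (x := γ)
  rwa [mul_right_iterate] at hγ

theorem cosetSize.mem_periodicPts {n q τ : ℕ} {γ : ZMod n} (hτ : cosetSize n q γ τ) :
    γ ∈ periodicPts (· * (q : ZMod n)) :=
  minimalPeriod_pos_iff_mem_periodicPts.1 (hτ.minimalPeriod_eq ▸ hτ.1.1)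

theorem cyclotomic_decomposition_general (n q t τ : ℕ) (γ : ZMod n) (hτ : cosetSize n q γ τ) :
    coset n (q ^ t) γ = coset n (q ^ Nat.gcd t τ) γ ∧
    coset n q γ =
      ⋃ j ∈ Finset.range (Nat.gcd t τ), coset n (q ^ t) (γ * (q : ZMod n) ^ j) ∧
    Set.Pairwise ↑(Finset.range (Nat.gcd t τ))
      (fun i j => Disjoint (coset n (q ^ t) (γ * (q : ZMod n) ^ i))
        (coset n (q ^ t) (γ * (q : ZMod n) ^ j))) := by
  have hx := hτ.mem_periodicPts
  have hiter (i : ℕ) : γ * (q : ZMod n) ^ i = (· * (q : ZMod n))^[i] γ := by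
    rw [mul_right_iterate]
  rw [coset_eq_range_iterate n q γ]
  simp only [coset_pow_eq_range_iterate, hiter, ← hτ.minimalPeriod_eq]
  exact ⟨range_iterate_mul_eq_range_iterate_gcd_mul hx t,
    range_iterate_eq_iUnion_range_iterate_mul hx t, pairwise_disjoint_range_iterate_mul hx t⟩

/-- For `t' = gcd(t, τ)`: the `q^t`-coset of `γ` equals the `q^(t')`-coset of `γ`, and
`c_{n/q}(γ)` is the disjoint union of the `q^t`-cosets of `γ q^j`, `j = 0, …, t' - 1`. -/
theorem cyclotomic_decomposition (n q t τ : ℕ) (hn : 0 < n) (hq : 0 < q) (ht : 0 < t)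
    (hco : Nat.Coprime q n) (γ : ZMod n) (hτ : cosetSize n q γ τ) :
    coset n (q ^ t) γ = coset n (q ^ Nat.gcd t τ) γ ∧
    coset n q γ =
      ⋃ j ∈ Finset.range (Nat.gcd t τ), coset n (q ^ t) (γ * (q : ZMod n) ^ j) ∧
    Set.Pairwise ↑(Finset.range (Nat.gcd t τ))
      (fun i j => Disjoint (coset n (q ^ t) (γ * (q : ZMod n) ^ i))
        (coset n (q ^ t) (γ * (q : ZMod n) ^ j))) :=
  cyclotomic_decomposition_general n q t τ γ hτ
end
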